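/- Let J ∈ ℝ^{M×M} be symmetric positive semidefinite and U ∈ ℝ^{M×(M−K)} with UᵀU = I. Let υ be a random vector in ℝ^M with E[υ] = 0 and E[υυᵀ] = J. Define the estimator error e = U(UᵀJU)†Uᵀ υ. Then E[eᵀWe] = Tr((UᵀJU)†(UᵀWU)) for any symmetric positive semidefinite W ∈ ℝ^{M×M}. -/

import Mathlib

/-! The estimator error is `e = A υ` with `A = U B Uᵀ` and `B` symmetric (as the pseudo-inverse of
the symmetric `UᵀJU`), so `E[eᵀWe] = Tr(AᵀWA J) = Tr(B (UᵀWU) B (UᵀJU))`, and cycling the trace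
turns this into `Tr((B (UᵀJU) B) (UᵀWU)) = Tr(B (UᵀWU))`. -/

open Matrix MeasureTheory

/-- `B` satisfies the four Moore–Penrose conditions for `A`. -/
def IsMoorePenrose {m n : Type*} [Fintype m] [Fintype n]
    (A : Matrix m n ℝ) (B : Matrix n m ℝ) : Prop :=
  A * B * A = A ∧ B * A * B = B ∧ (A * B)ᵀ = A * B ∧ (B * A)ᵀ = B * A

namespace IsMoorePenrose

variable {m n : Type*} [Fintype m] [Fintype n] {A : Matrix m n ℝ} {B C : Matrix n m ℝ}

theorem unique (hB : IsMoorePenrose A B) (hC : IsMoorePenrose A C) : B = C := by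
  obtain ⟨hABA, hBAB, hAB, hBA⟩ := hB
  obtain ⟨hACA, hCAC, hAC, hCA⟩ := hC
  have hAB_eq : A * B = A * C := by
    calc A * B = (A * C * A * B)ᵀ := by rw [hACA, hAB]
    _ = (A * B)ᵀ * (A * C)ᵀ := by simp only [transpose_mul, Matrix.mul_assoc]
    _ = A * C := by rw [hAB, hAC, ← Matrix.mul_assoc, hABA]
  have hBA_eq : B * A = C * A := by
    calc B * A = (B * (A * C * A))ᵀ := by rw [hACA, hBA]
    _ = (C * A)ᵀ * (B * A)ᵀ := by simp only [transpose_mul, Matrix.mul_assoc]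
    _ = C * A := by rw [hBA, hCA, Matrix.mul_assoc, ← Matrix.mul_assoc A, hABA]
  calc B = B * (A * B) := by rw [← Matrix.mul_assoc, hBAB]
  _ = C * A * C := by rw [hAB_eq, ← Matrix.mul_assoc, hBA_eq]
  _ = C := hCAC

theorem transpose (hB : IsMoorePenrose A B) : IsMoorePenrose Aᵀ Bᵀ := by
  obtain ⟨hABA, hBAB, hAB, hBA⟩ := hB
  refine ⟨?_, ?_, ?_, ?_⟩
  · rw [← transpose_mul, ← transpose_mul, ← Matrix.mul_assoc, hABA]
  · rw [← transpose_mul, ← transpose_mul, ← Matrix.mul_assoc, hBAB]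
  · rw [← transpose_mul, hBA, hBA]
  · rw [← transpose_mul, hAB, hAB]

theorem isSymm {A B : Matrix n n ℝ} (hA : A.IsSymm) (hB : IsMoorePenrose A B) :
    B.IsSymm :=
  (hA.eq ▸ hB.transpose : IsMoorePenrose A Bᵀ).unique hB

end IsMoorePenrose

theorem dotProduct_mulVec_mulVec {m n : Type*} [Fintype m] [Fintype n]
    (A : Matrix m n ℝ) (W : Matrix m m ℝ) (x : n → ℝ) :
    (A *ᵥ x) ⬝ᵥ (W *ᵥ (A *ᵥ x)) = x ⬝ᵥ ((Aᵀ * W * A) *ᵥ x) := by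
  rw [← mulVec_mulVec, ← mulVec_mulVec, dotProduct_mulVec x, vecMul_transpose]

theorem integral_dotProduct_mulVec {Ω n : Type*} [MeasurableSpace Ω] [Fintype n]
    {μ : Measure Ω} {υ : Ω → n → ℝ} {J : Matrix n n ℝ}
    (hint : ∀ i j, Integrable (fun ω => υ ω i * υ ω j) μ)
    (hcov : ∀ i j, ∫ ω, υ ω i * υ ω j ∂μ = J i j) (Q : Matrix n n ℝ) :
    ∫ ω, υ ω ⬝ᵥ (Q *ᵥ υ ω) ∂μ = (Q * Jᵀ).trace := by
  have hpt : ∀ ω, υ ω ⬝ᵥ (Q *ᵥ υ ω) = ∑ i, ∑ j, Q i j * (υ ω i * υ ω j) := fun ω => by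
    simp only [dotProduct, mulVec, Finset.mul_sum]
    exact Finset.sum_congr rfl fun i _ => Finset.sum_congr rfl fun j _ => by ring
  have hint' : ∀ i j, Integrable (fun ω => Q i j * (υ ω i * υ ω j)) μ :=
    fun i j => (hint i j).const_mul _
  simp_rw [hpt]
  rw [integral_finsetSum _ fun i _ => integrable_finsetSum _ fun j _ => hint' i j]
  simp_rw [integral_finsetSum _ fun j _ => hint' _ j, integral_const_mul, hcov]
  simp only [trace, diag, mul_apply, transpose_apply]

theorem trace_sandwich_moorePenrose {M r : Type*} [Fintype M] [Fintype r]
    {J : Matrix M M ℝ} (W : Matrix M M ℝ) {U : Matrix M r ℝ} {B : Matrix r r ℝ}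
    (hJ : J.IsSymm) (hB : IsMoorePenrose (Uᵀ * J * U) B) :
    ((U * B * Uᵀ)ᵀ * W * (U * B * Uᵀ) * J).trace = (B * (Uᵀ * W * U)).trace := by
  have hS : (Uᵀ * J * U).IsSymm := by
    simp only [IsSymm, transpose_mul, transpose_transpose, hJ.eq, Matrix.mul_assoc]
  have hBs : Bᵀ = B := (hB.isSymm hS).eq
  calc ((U * B * Uᵀ)ᵀ * W * (U * B * Uᵀ) * J).trace
      = (U * (B * (Uᵀ * W * U) * B * (Uᵀ * J))).trace := by
        simp only [transpose_mul, transpose_transpose, hBs, Matrix.mul_assoc]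
  _ = (B * (Uᵀ * W * U) * (B * (Uᵀ * J * U))).trace := by
        rw [trace_mul_comm]
        simp only [Matrix.mul_assoc]
  _ = (B * (Uᵀ * J * U) * B * (Uᵀ * W * U)).trace := by
        rw [trace_mul_comm]
        simp only [Matrix.mul_assoc]
  _ = (B * (Uᵀ * W * U)).trace := by rw [hB.2.1]

theorem wmse_ccrb_efficient_general {Ω : Type*} [MeasurableSpace Ω]
    (μ : Measure Ω)
    {M r : ℕ} (J W : Matrix (Fin M) (Fin M) ℝ) (U : Matrix (Fin M) (Fin r) ℝ)
    (B : Matrix (Fin r) (Fin r) ℝ) (υ : Ω → Fin M → ℝ)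
    (hB : IsMoorePenrose (Uᵀ * J * U) B)
    (hint : ∀ i j, Integrable (fun ω => υ ω i * υ ω j) μ)
    (hcov : ∀ i j, ∫ ω, υ ω i * υ ω j ∂μ = J i j) :
    ∫ ω, ((U * B * Uᵀ) *ᵥ υ ω) ⬝ᵥ (W *ᵥ ((U * B * Uᵀ) *ᵥ υ ω)) ∂μ
      = (B * (Uᵀ * W * U)).trace := by
  have hJ : J.IsSymm := IsSymm.ext fun i j => by simp only [← hcov, mul_comm]
  simp_rw [dotProduct_mulVec_mulVec]
  rw [integral_dotProduct_mulVec hint hcov, hJ.eq, trace_sandwich_moorePenrose W hJ hB]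

/-- The WMSE of the error `e = U(UᵀJU)†Uᵀυ`, where `E[υ] = 0` and `E[υυᵀ] = J`,
equals `Tr((UᵀJU)†(UᵀWU))`. -/
theorem wmse_ccrb_efficient {Ω : Type*} [MeasurableSpace Ω]
    (μ : Measure Ω) [IsProbabilityMeasure μ]
    {M r : ℕ} (J W : Matrix (Fin M) (Fin M) ℝ) (U : Matrix (Fin M) (Fin r) ℝ)
    (B : Matrix (Fin r) (Fin r) ℝ) (υ : Ω → Fin M → ℝ)
    (hJ : J.PosSemidef) (hW : W.PosSemidef) (hU : Uᵀ * U = 1)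
    (hB : IsMoorePenrose (Uᵀ * J * U) B)
    (hint : ∀ i j, Integrable (fun ω => υ ω i * υ ω j) μ)
    (hmean : ∀ i, ∫ ω, υ ω i ∂μ = 0)
    (hcov : ∀ i j, ∫ ω, υ ω i * υ ω j ∂μ = J i j) :
    ∫ ω, ((U * B * Uᵀ) *ᵥ υ ω) ⬝ᵥ (W *ᵥ ((U * B * Uᵀ) *ᵥ υ ω)) ∂μ
      = (B * (Uᵀ * W * U)).trace :=
  wmse_ccrb_efficient_general μ J W U B υ hB hint hcov
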